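/- Let a, b satisfy Assumption (A) with (α,β) ∈ Ω₁, and r = a/b. Then there exists C > 0 such that for all t ≥ 0: |a'(t)/(r(t)a(t)²)| ≤ C·(1/(a(t)·(1+R(t)))), |r(t)a'(t)/a(t)²| ≤ C·(r(t)²/(a(t)·(1+R(t)))), and |r'(t)/a(t)| ≤ C·(r(t)²/(a(t)·(1+R(t)))), where R(t) = ∫₀ᵗ r(τ)dτ. -/

import Mathlib

open MeasureTheory

private lemma rpow_div_eq {P A B p q : ℝ} (hP : 0 < P) :
    (A * P ^ p) / (B * P ^ q) = (A / B) * P ^ (p - q) := by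
  rw [Real.rpow_sub hP, mul_div_mul_comm]

private lemma mul_rpow_eq {P X Y p q : ℝ} (hP : 0 < P) :
    (X * P ^ p) * (Y * P ^ q) = (X * Y) * P ^ (p + q) := by
  rw [Real.rpow_add hP]; ring

private lemma div_le_helper {P x y A B p q : ℝ} (hP : 0 < P)
    (hx : 0 ≤ x) (hxA : x ≤ A * P ^ p) (hB : 0 < B) (hyB : B * P ^ q ≤ y) :
    x / y ≤ (A / B) * P ^ (p - q) := by
  have hBP : 0 < B * P ^ q := mul_pos hB (Real.rpow_pos_of_pos hP q)
  calc x / y ≤ (A * P ^ p) / (B * P ^ q) := div_le_div₀ (le_trans hx hxA) hxA hBP hyB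
    _ = (A / B) * P ^ (p - q) := rpow_div_eq hP

private lemma main_helper {P x1 x2 y1 y2 A B D E K p1 p2 q1 q2 : ℝ} (hP : 0 < P)
    (hx1 : 0 ≤ x1) (hx1A : x1 ≤ A * P ^ p1)
    (hB : 0 < B) (hx2 : B * P ^ p2 ≤ x2)
    (hD : 0 < D) (hy1 : D * P ^ q1 ≤ y1)
    (hy2 : 0 < y2) (hy2E : y2 ≤ E * P ^ q2)
    (hpq : p1 - p2 = q1 - q2)
    (hK0 : 0 ≤ K) (hK : A * E ≤ K * (B * D)) :
    x1 / x2 ≤ K * (y1 / y2) := by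
  have hq2 : 0 < P ^ q2 := Real.rpow_pos_of_pos hP q2
  have hE : 0 < E := by
    by_contra h
    push_neg at h
    nlinarith [lt_of_lt_of_le hy2 hy2E]
  have h1 : x1 / x2 ≤ (A / B) * P ^ (p1 - p2) := div_le_helper hP hx1 hx1A hB hx2
  have hy1' : 0 < y1 := lt_of_lt_of_le (mul_pos hD (Real.rpow_pos_of_pos hP q1)) hy1
  have h2 : (D / E) * P ^ (q1 - q2) ≤ y1 / y2 := by
    calc (D / E) * P ^ (q1 - q2) = (D * P ^ q1) / (E * P ^ q2) := (rpow_div_eq hP).symm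
      _ ≤ y1 / y2 := div_le_div₀ hy1'.le hy1 hy2 hy2E
  have h3 : A / B ≤ K * (D / E) := by
    rw [← mul_div_assoc, div_le_div_iff₀ hB hE]
    nlinarith [hK]
  calc x1 / x2 ≤ (A / B) * P ^ (p1 - p2) := h1
    _ ≤ (K * (D / E)) * P ^ (p1 - p2) :=
        mul_le_mul_of_nonneg_right h3 (Real.rpow_pos_of_pos hP _).le
    _ = K * ((D / E) * P ^ (q1 - q2)) := by rw [hpq, mul_assoc]
    _ ≤ K * (y1 / y2) := mul_le_mul_of_nonneg_left h2 hK0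

set_option maxHeartbeats 1600000 in
/-- Lemma 3.7 (second part): the error terms coming from derivatives of the
    coefficients are controlled by the principal small quantities. -/
theorem coefficient_derivative_bounds
    (a b : ℝ → ℝ) (α β C : ℝ) (hC : 1 ≤ C)
    (hda : Differentiable ℝ a) (hdb : Differentiable ℝ b)
    (ha : ∀ t : ℝ, 0 ≤ t → C⁻¹ * (1 + t) ^ α ≤ a t ∧ a t ≤ C * (1 + t) ^ α)
    (hb : ∀ t : ℝ, 0 ≤ t → C⁻¹ * (1 + t) ^ β ≤ b t ∧ b t ≤ C * (1 + t) ^ β)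
    (ha' : ∀ t : ℝ, 0 ≤ t → |deriv a t| ≤ C * (1 + t) ^ (α - 1))
    (hb' : ∀ t : ℝ, 0 ≤ t → |deriv b t| ≤ C * (1 + t) ^ (β - 1))
    (hβ1 : -1 < β) (hβ2 : β < α + 1) (hβ3 : β < 2 * α + 1)
    (R : ℝ → ℝ) (hR : ∀ t : ℝ, R t = ∫ τ in (0:ℝ)..t, a τ / b τ) :
    ∃ C' : ℝ, 0 < C' ∧ ∀ t : ℝ, 0 ≤ t →
      |deriv a t / ((a t / b t) * (a t) ^ 2)| ≤ C' * (1 / (a t * (1 + R t)))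
      ∧ |(a t / b t) * deriv a t / (a t) ^ 2|
          ≤ C' * ((a t / b t) ^ 2 / (a t * (1 + R t)))
      ∧ |deriv (fun τ => a τ / b τ) t / a t|
          ≤ C' * ((a t / b t) ^ 2 / (a t * (1 + R t))) := by
  have hC0 : 0 < C := lt_of_lt_of_le one_pos hC
  have hCne : C ≠ 0 := hC0.ne'
  have hCi : 0 < C⁻¹ := inv_pos.mpr hC0
  have hCC : C / C⁻¹ = C ^ 2 := by rw [div_eq_mul_inv, inv_inv, ← pow_two]
  have hg1 : 0 < α - β + 1 := by linarith
  have hMnn : (0:ℝ) ≤ C ^ 2 / (α - β + 1) := div_nonneg (by positivity) hg1.le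
  obtain ⟨M, hMdef⟩ : ∃ M : ℝ, M = 1 + C ^ 2 / (α - β + 1) := ⟨_, rfl⟩
  have hM1 : (1:ℝ) ≤ M := by rw [hMdef]; linarith
  have hM0 : (0:ℝ) ≤ M := by linarith
  have hK0' : (0:ℝ) ≤ 2 * C ^ 10 * M := mul_nonneg (by positivity) hM0
  have hC2 : (1:ℝ) ≤ C ^ 2 := by nlinarith
  have hC4 : (1:ℝ) ≤ C ^ 4 := by nlinarith
  refine ⟨2 * C ^ 10 * M, by nlinarith [pow_pos hC0 10], ?_⟩
  intro t ht
  have hP : (0:ℝ) < 1 + t := by linarith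
  have hQ : ∀ q : ℝ, 0 < (1 + t) ^ q := fun q => Real.rpow_pos_of_pos hP q
  obtain ⟨ha1, ha2⟩ := ha t ht
  obtain ⟨hb1, hb2⟩ := hb t ht
  have haD := ha' t ht
  have hbD := hb' t ht
  have hapos : 0 < a t := lt_of_lt_of_le (mul_pos hCi (hQ α)) ha1
  have hbpos : 0 < b t := lt_of_lt_of_le (mul_pos hCi (hQ β)) hb1
  have hrpos : 0 < a t / b t := div_pos hapos hbpos
  have hr1 : (C⁻¹ / C) * (1 + t) ^ (α - β) ≤ a t / b t := by
    calc (C⁻¹ / C) * (1 + t) ^ (α - β) = (C⁻¹ * (1 + t) ^ α) / (C * (1 + t) ^ β) :=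
          (rpow_div_eq hP).symm
      _ ≤ a t / b t := div_le_div₀ hapos.le ha1 hbpos hb2
  have hr2 : a t / b t ≤ (C / C⁻¹) * (1 + t) ^ (α - β) := by
    calc a t / b t ≤ (C * (1 + t) ^ α) / (C⁻¹ * (1 + t) ^ β) :=
          div_le_div₀ (mul_nonneg hC0.le (hQ α).le) ha2 (mul_pos hCi (hQ β)) hb1
      _ = (C / C⁻¹) * (1 + t) ^ (α - β) := rpow_div_eq hP
  -- bounds on R
  have hIccpos : ∀ u ∈ Set.Icc (0:ℝ) t, (0:ℝ) < 1 + u := fun u hu => by linarith [hu.1]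
  have haOn : ∀ u ∈ Set.Icc (0:ℝ) t, 0 < a u := fun u hu =>
    lt_of_lt_of_le (mul_pos hCi (Real.rpow_pos_of_pos (hIccpos u hu) α)) (ha u hu.1).1
  have hbOn : ∀ u ∈ Set.Icc (0:ℝ) t, 0 < b u := fun u hu =>
    lt_of_lt_of_le (mul_pos hCi (Real.rpow_pos_of_pos (hIccpos u hu) β)) (hb u hu.1).1
  have hR0 : 0 ≤ R t := by
    rw [hR t]
    exact intervalIntegral.integral_nonneg ht fun u hu =>
      div_nonneg (haOn u hu).le (hbOn u hu).le
  have hint1 : IntervalIntegrable (fun τ => a τ / b τ) volume 0 t := by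
    apply ContinuousOn.intervalIntegrable
    rw [Set.uIcc_of_le ht]
    exact (hda.continuous.continuousOn).div (hdb.continuous.continuousOn)
      (fun u hu => (hbOn u hu).ne')
  have hint2 : IntervalIntegrable (fun τ : ℝ => C ^ 2 * (1 + τ) ^ (α - β)) volume 0 t := by
    apply ContinuousOn.intervalIntegrable
    rw [Set.uIcc_of_le ht]
    exact continuousOn_const.mul (((continuous_const.add continuous_id).continuousOn).rpow_const
      (fun u hu => Or.inl (hIccpos u hu).ne'))
  have hptle : ∀ u ∈ Set.Icc (0:ℝ) t, a u / b u ≤ C ^ 2 * (1 + u) ^ (α - β) := by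
    intro u hu
    have hPu := hIccpos u hu
    calc a u / b u ≤ (C * (1 + u) ^ α) / (C⁻¹ * (1 + u) ^ β) :=
          div_le_div₀ (mul_nonneg hC0.le (Real.rpow_pos_of_pos hPu α).le) (ha u hu.1).2
            (mul_pos hCi (Real.rpow_pos_of_pos hPu β)) (hb u hu.1).1
      _ = (C / C⁻¹) * (1 + u) ^ (α - β) := rpow_div_eq hPu
      _ = C ^ 2 * (1 + u) ^ (α - β) := by rw [hCC]
  have hx1e : (1:ℝ) ≤ (1 + t) ^ (α - β + 1) :=
    Real.one_le_rpow (show (1:ℝ) ≤ 1 + t by linarith) hg1.le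
  have hRub : 1 + R t ≤ M * (1 + t) ^ (α - β + 1) := by
    have hmono := intervalIntegral.integral_mono_on ht hint1 hint2 hptle
    have hcomp : (∫ τ in (0:ℝ)..t, C ^ 2 * (1 + τ) ^ (α - β))
        = C ^ 2 * (((1 + t) ^ (α - β + 1) - 1) / (α - β + 1)) := by
      rw [intervalIntegral.integral_const_mul]
      congr 1
      calc (∫ τ in (0:ℝ)..t, (1 + τ) ^ (α - β))
          = ∫ x in (1 + 0 : ℝ)..(1 + t), x ^ (α - β) :=
            intervalIntegral.integral_comp_add_left (fun x : ℝ => x ^ (α - β)) 1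
        _ = ((1 + t) ^ (α - β + 1) - (1 + 0 : ℝ) ^ (α - β + 1)) / (α - β + 1) :=
            integral_rpow (Or.inl (by linarith))
        _ = ((1 + t) ^ (α - β + 1) - 1) / (α - β + 1) := by
            norm_num
    have hRle : R t ≤ C ^ 2 * (((1 + t) ^ (α - β + 1) - 1) / (α - β + 1)) := by
      rw [hR t]; exact hmono.trans_eq hcomp
    have hexp : C ^ 2 * (((1 + t) ^ (α - β + 1) - 1) / (α - β + 1))
        = (M - 1) * (1 + t) ^ (α - β + 1) - (M - 1) := by
      rw [hMdef]; ring
    nlinarith [hRle, hexp, hx1e, hM1]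
  have hy2pos : 0 < a t * (1 + R t) := mul_pos hapos (by linarith)
  have hy2b : a t * (1 + R t) ≤ (C * M) * (1 + t) ^ (α + (α - β + 1)) := by
    calc a t * (1 + R t) ≤ (C * (1 + t) ^ α) * (M * (1 + t) ^ (α - β + 1)) :=
          mul_le_mul ha2 hRub (by linarith) (mul_nonneg hC0.le (hQ α).le)
      _ = (C * M) * (1 + t) ^ (α + (α - β + 1)) := mul_rpow_eq hP
  have hy1b : ((C⁻¹ / C) * (C⁻¹ / C)) * (1 + t) ^ ((α - β) + (α - β)) ≤ (a t / b t) ^ 2 := by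
    calc ((C⁻¹ / C) * (C⁻¹ / C)) * (1 + t) ^ ((α - β) + (α - β))
        = ((C⁻¹ / C) * (1 + t) ^ (α - β)) * ((C⁻¹ / C) * (1 + t) ^ (α - β)) :=
          (mul_rpow_eq hP).symm
      _ ≤ (a t / b t) * (a t / b t) :=
          mul_le_mul hr1 hr1 (mul_nonneg (div_nonneg hCi.le hC0.le) (hQ _).le) hrpos.le
      _ = (a t / b t) ^ 2 := (pow_two _).symm
  have hDpos : 0 < (C⁻¹ / C) * (C⁻¹ / C) := mul_pos (div_pos hCi hC0) (div_pos hCi hC0)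
  refine ⟨?_, ?_, ?_⟩
  · -- first bound
    rw [abs_div, abs_of_pos (mul_pos hrpos (pow_pos hapos 2))]
    have hx2b : ((C⁻¹ / C) * (C⁻¹ * C⁻¹)) * (1 + t) ^ ((α - β) + (α + α))
        ≤ (a t / b t) * a t ^ 2 := by
      calc ((C⁻¹ / C) * (C⁻¹ * C⁻¹)) * (1 + t) ^ ((α - β) + (α + α))
          = ((C⁻¹ / C) * (1 + t) ^ (α - β)) * ((C⁻¹ * C⁻¹) * (1 + t) ^ (α + α)) :=
            (mul_rpow_eq hP).symm
        _ = ((C⁻¹ / C) * (1 + t) ^ (α - β)) * ((C⁻¹ * (1 + t) ^ α) * (C⁻¹ * (1 + t) ^ α)) := by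
            rw [← mul_rpow_eq hP]
        _ ≤ (a t / b t) * (a t * a t) :=
            mul_le_mul hr1 (mul_le_mul ha1 ha1 (mul_nonneg hCi.le (hQ α).le) hapos.le)
              (mul_nonneg (mul_nonneg hCi.le (hQ α).le) (mul_nonneg hCi.le (hQ α).le)) hrpos.le
        _ = (a t / b t) * a t ^ 2 := by ring
    refine main_helper hP (abs_nonneg _) haD
      (mul_pos (div_pos hCi hC0) (mul_pos hCi hCi)) hx2b one_pos
      (show (1:ℝ) * (1 + t) ^ (0:ℝ) ≤ 1 by rw [Real.rpow_zero, mul_one])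
      hy2pos hy2b (by ring) hK0' ?_
    have e1 : C * (C * M) = C ^ 2 * M := by ring
    have e2 : 2 * C ^ 10 * M * ((C⁻¹ / C) * (C⁻¹ * C⁻¹) * 1) = 2 * C ^ 6 * M := by
      field_simp
    rw [e1, e2]
    have h6 : C ^ 2 ≤ C ^ 6 := pow_le_pow_right₀ hC (by norm_num)
    calc C ^ 2 * M ≤ C ^ 6 * M := mul_le_mul_of_nonneg_right h6 hM0
      _ ≤ 2 * C ^ 6 * M := by
          have := mul_nonneg (pow_nonneg hC0.le 6) hM0
          linarith
  · -- second bound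
    rw [abs_div, abs_of_pos (pow_pos hapos 2), abs_mul, abs_of_pos hrpos]
    have hx1b : (a t / b t) * |deriv a t| ≤ ((C / C⁻¹) * C) * (1 + t) ^ ((α - β) + (α - 1)) := by
      calc (a t / b t) * |deriv a t| ≤ ((C / C⁻¹) * (1 + t) ^ (α - β)) * (C * (1 + t) ^ (α - 1)) :=
            mul_le_mul hr2 haD (abs_nonneg _)
              (mul_nonneg (div_nonneg hC0.le hCi.le) (hQ _).le)
        _ = ((C / C⁻¹) * C) * (1 + t) ^ ((α - β) + (α - 1)) := mul_rpow_eq hP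
    have hx2b : (C⁻¹ * C⁻¹) * (1 + t) ^ (α + α) ≤ a t ^ 2 := by
      calc (C⁻¹ * C⁻¹) * (1 + t) ^ (α + α) = (C⁻¹ * (1 + t) ^ α) * (C⁻¹ * (1 + t) ^ α) :=
            (mul_rpow_eq hP).symm
        _ ≤ a t * a t := mul_le_mul ha1 ha1 (mul_nonneg hCi.le (hQ α).le) hapos.le
        _ = a t ^ 2 := (pow_two _).symm
    refine main_helper hP (mul_nonneg hrpos.le (abs_nonneg _)) hx1b
      (mul_pos hCi hCi) hx2b hDpos hy1b hy2pos hy2b (by ring) hK0' ?_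
    have e1 : (C / C⁻¹) * C * (C * M) = C ^ 4 * M := by rw [hCC]; ring
    have e2 : 2 * C ^ 10 * M * ((C⁻¹ * C⁻¹) * ((C⁻¹ / C) * (C⁻¹ / C))) = 2 * C ^ 4 * M := by
      field_simp
    rw [e1, e2]
    have := mul_nonneg (pow_nonneg hC0.le 4) hM0
    linarith
  · -- third bound
    rw [deriv_fun_div (hda t) (hdb t) hbpos.ne', div_div, abs_div,
      abs_of_pos (mul_pos (pow_pos hbpos 2) hapos)]
    have hnum : |deriv a t * b t - a t * deriv b t|
        ≤ (C * C + C * C) * (1 + t) ^ ((α - 1) + β) := by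
      have h1 : |deriv a t * b t - a t * deriv b t| ≤ |deriv a t| * b t + a t * |deriv b t| := by
        calc |deriv a t * b t - a t * deriv b t|
            ≤ |deriv a t * b t| + |a t * deriv b t| := abs_sub _ _
          _ = |deriv a t| * b t + a t * |deriv b t| := by
              rw [abs_mul, abs_mul, abs_of_pos hbpos, abs_of_pos hapos]
      have k1 : (C * (1 + t) ^ (α - 1)) * (C * (1 + t) ^ β)
          = (C * C) * (1 + t) ^ ((α - 1) + β) := mul_rpow_eq hP
      have k2 : (C * (1 + t) ^ α) * (C * (1 + t) ^ (β - 1))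
          = (C * C) * (1 + t) ^ (α + (β - 1)) := mul_rpow_eq hP
      calc |deriv a t * b t - a t * deriv b t|
          ≤ |deriv a t| * b t + a t * |deriv b t| := h1
        _ ≤ (C * (1 + t) ^ (α - 1)) * (C * (1 + t) ^ β)
            + (C * (1 + t) ^ α) * (C * (1 + t) ^ (β - 1)) :=
            add_le_add
              (mul_le_mul haD hb2 hbpos.le (mul_nonneg hC0.le (hQ _).le))
              (mul_le_mul ha2 hbD (abs_nonneg _) (mul_nonneg hC0.le (hQ _).le))
        _ = (C * C) * (1 + t) ^ ((α - 1) + β) + (C * C) * (1 + t) ^ (α + (β - 1)) := by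
            rw [k1, k2]
        _ = (C * C + C * C) * (1 + t) ^ ((α - 1) + β) := by
            rw [show α + (β - 1) = (α - 1) + β from by ring]; ring
    have hx2b : ((C⁻¹ * C⁻¹) * C⁻¹) * (1 + t) ^ ((β + β) + α) ≤ b t ^ 2 * a t := by
      calc ((C⁻¹ * C⁻¹) * C⁻¹) * (1 + t) ^ ((β + β) + α)
          = ((C⁻¹ * C⁻¹) * (1 + t) ^ (β + β)) * (C⁻¹ * (1 + t) ^ α) := (mul_rpow_eq hP).symm
        _ = ((C⁻¹ * (1 + t) ^ β) * (C⁻¹ * (1 + t) ^ β)) * (C⁻¹ * (1 + t) ^ α) := by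
            rw [← mul_rpow_eq hP]
        _ ≤ (b t * b t) * a t :=
            mul_le_mul (mul_le_mul hb1 hb1 (mul_nonneg hCi.le (hQ β).le) hbpos.le) ha1
              (mul_nonneg hCi.le (hQ α).le) (mul_pos hbpos hbpos).le
        _ = b t ^ 2 * a t := by ring
    refine main_helper hP (abs_nonneg _) hnum
      (mul_pos (mul_pos hCi hCi) hCi) hx2b hDpos hy1b hy2pos hy2b (by ring) hK0' ?_
    have e1 : (C * C + C * C) * (C * M) = 2 * C ^ 3 * M := by ring
    have e2 : 2 * C ^ 10 * M * (((C⁻¹ * C⁻¹) * C⁻¹) * ((C⁻¹ / C) * (C⁻¹ / C)))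
        = 2 * C ^ 3 * M := by
      field_simp
    rw [e1, e2]
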